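/- Consider the linearly parameterized error dynamics ṡ = −η s + Y(t)(â − a) with η > 0, together with the higher-order bounded-gain-forgetting composite law v̂̇ = −P(t) Y(t)ᵀ(s + Y(t)(â − a)), â̇ = β 𝒩(t) P(t)(v̂ − â), where 𝒩(t) = 1 + μ‖Y(t)‖² with μ > (3η + 2)/(2ηβ), β > 0, and P(t) is a symmetric positive definite matrix-valued signal satisfying (d/dt) P(t)⁻¹ = −λ(t) P(t)⁻¹ + Y(t)ᵀY(t) with forgetting factor λ(t) = λ₀(1 − ‖P(t)‖/P₀) ≥ 0, λ₀ > 0, P₀ > 0, which keeps ‖P(t)‖ ≤ P₀. Then all trajectories (x, v̂, â) remain bounded, f̃ = Y(â − a) ∈ L² ∩ L∞, s ∈ L² ∩ L∞, s(t) → 0 as t → ∞, and x(t) → x_d(t). -/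

import Mathlib

/-!
With `W₁ = v̂ - a`, `W₂ = v̂ - â` and `Q = P⁻¹`, the function `V = (s² + W₁ᵀ Q W₁ + W₂ᵀ Q W₂) / 2`
satisfies, writing `G = Y W₁` and `H = Y W₂` (so that `f̃ = G - H`),
`V̇ ≤ -η s² - 2 s H - G² / 2 - (β μ - 3/2) H²`: the forgetting term only helps, and the term
`β 𝒩 ‖W₂‖²` dominates `β μ H²` since `H² ≤ ‖Y‖² ‖W₂‖²`. The condition on `μ` makes the
quadratic form `η s² + 2 s H + (β μ - 3/2) H²` positive definite, so `V̇ ≤ -k (s² + f̃²)`.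
Hence `V` is bounded, which bounds `s`, `W₁` and `W₂` because `Q ≥ P₀⁻¹`;
`∫ (s² + f̃²) ≤ V(0) / k`; and `s`, square integrable with bounded derivative, tends to zero
by Barbalat's lemma.
-/

open MeasureTheory Filter
open scoped RealInnerProductSpace ENNReal

noncomputable section

/-- The signal `g` is square-integrable (`L²`) on `[0, ∞)`. -/
def InL2 {F : Type*} [NormedAddCommGroup F] (g : ℝ → F) : Prop :=
  ∫⁻ t in Set.Ici (0 : ℝ), ENNReal.ofReal (‖g t‖ ^ 2) < ⊤

/-- The signal `g` is bounded (`L∞`) on `[0, ∞)`. -/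
def InLinf {F : Type*} [NormedAddCommGroup F] (g : ℝ → F) : Prop :=
  ∃ C : ℝ, ∀ t : ℝ, 0 ≤ t → ‖g t‖ ≤ C

/-- The rank-one operator `v vᵀ` on Euclidean space, `w ↦ ⟪v, w⟫ v`. -/
def rankOne {p : ℕ} (v : EuclideanSpace ℝ (Fin p)) :
    EuclideanSpace ℝ (Fin p) →L[ℝ] EuclideanSpace ℝ (Fin p) :=
  (innerSL ℝ v).smulRight v

open Set

namespace ContinuousLinearMap

variable {E : Type*} [NormedAddCommGroup E] [InnerProductSpace ℝ E] {T : E →L[ℝ] E}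

lemma isPositive_of_inner_pos (hT : ∀ v w, ⟪T v, w⟫ = ⟪v, T w⟫)
    (hpos : ∀ v, v ≠ 0 → 0 < ⟪v, T v⟫) : T.IsPositive := by
  refine (isPositive_iff T).2 ⟨hT, fun v => ?_⟩
  rcases eq_or_ne v 0 with rfl | hv
  · simp
  · rw [real_inner_comm]
    exact (hpos v hv).le

namespace IsPositive

lemma sq_inner_le_inner_mul_inner (hT : T.IsPositive) (u w : E) :
    ⟪u, T w⟫ ^ 2 ≤ ⟪u, T u⟫ * ⟪w, T w⟫ := by
  have hquad : ∀ θ : ℝ, 0 ≤ ⟪w, T w⟫ * (θ * θ) + 2 * ⟪u, T w⟫ * θ + ⟪u, T u⟫ := by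
    intro θ
    have h := hT.inner_nonneg_right (u + θ • w)
    have hwu : ⟪w, T u⟫ = ⟪u, T w⟫ := by
      rw [← hT.inner_left_eq_inner_right, real_inner_comm]
    simp only [map_add, map_smul, inner_add_left, inner_add_right, real_inner_smul_left,
      real_inner_smul_right, hwu] at h
    linarith
  have := discrim_le_zero hquad
  rw [discrim] at this
  linarith

lemma norm_sq_apply_le (hT : T.IsPositive) (x : E) : ‖T x‖ ^ 2 ≤ ‖T‖ * ⟪x, T x⟫ := by
  have hcs := hT.sq_inner_le_inner_mul_inner x (T x)
  rw [← hT.inner_left_eq_inner_right, real_inner_self_eq_norm_sq] at hcs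
  have hop : ⟪T x, T (T x)⟫ ≤ ‖T‖ * ‖T x‖ ^ 2 := by
    calc ⟪T x, T (T x)⟫ ≤ ‖T x‖ * ‖T (T x)‖ := real_inner_le_norm _ _
      _ ≤ ‖T x‖ * (‖T‖ * ‖T x‖) := by gcongr; exact T.le_opNorm _
      _ = ‖T‖ * ‖T x‖ ^ 2 := by ring
  rcases (sq_nonneg ‖T x‖).eq_or_lt with h0 | hpos
  · rw [← h0]; exact mul_nonneg (norm_nonneg T) (hT.inner_nonneg_right x)
  · nlinarith [hT.inner_nonneg_right x]

variable {S : E →L[ℝ] E}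

lemma inner_apply_self_nonneg_of_comp_eq_id (hT : T.IsPositive)
    (hTS : T ∘L S = ContinuousLinearMap.id ℝ E) (v : E) : 0 ≤ ⟪v, S v⟫ := by
  simpa [← ContinuousLinearMap.comp_apply, hTS] using hT.inner_nonneg_left (S v)

lemma norm_sq_le_mul_inner_of_comp_eq_id (hT : T.IsPositive)
    (hTS : T ∘L S = ContinuousLinearMap.id ℝ E) {c : ℝ} (hc : ‖T‖ ≤ c) (v : E) :
    ‖v‖ ^ 2 ≤ c * ⟪v, S v⟫ := by
  have hv : T (S v) = v := congr($hTS v)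
  have h := hT.norm_sq_apply_le (S v)
  rw [hv, real_inner_comm] at h
  exact h.trans (by gcongr; exact hT.inner_apply_self_nonneg_of_comp_eq_id hTS v)

end IsPositive

end ContinuousLinearMap

section Signals

variable {F : Type*} [NormedAddCommGroup F]

lemma InLinf.add {f g : ℝ → F} (hf : InLinf f)
    (hg : InLinf g) : InLinf fun t => f t + g t := by
  obtain ⟨C, hC⟩ := hf
  obtain ⟨D, hD⟩ := hg
  exact ⟨C + D, fun t ht => (norm_add_le _ _).trans (add_le_add (hC t ht) (hD t ht))⟩

lemma InLinf.sub {f g : ℝ → F} (hf : InLinf f)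
    (hg : InLinf g) : InLinf fun t => f t - g t := by
  obtain ⟨C, hC⟩ := hf
  obtain ⟨D, hD⟩ := hg
  exact ⟨C + D, fun t ht => (norm_sub_le _ _).trans (add_le_add (hC t ht) (hD t ht))⟩

lemma inLinf_const (c : F) : InLinf fun _ : ℝ => c :=
  ⟨‖c‖, fun _ _ => le_rfl⟩

lemma InLinf.const_mul {f : ℝ → ℝ} (hf : InLinf f) (c : ℝ) : InLinf fun t => c * f t := by
  obtain ⟨C, hC⟩ := hf
  exact ⟨|c| * C, fun t ht => by rw [norm_mul, Real.norm_eq_abs]; gcongr; exact hC t ht⟩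

lemma InLinf.inner [InnerProductSpace ℝ F] {f g : ℝ → F}
    (hf : InLinf f) (hg : InLinf g) : InLinf fun t => ⟪f t, g t⟫ := by
  obtain ⟨C, hC⟩ := hf
  obtain ⟨D, hD⟩ := hg
  have hC0 : 0 ≤ C := (norm_nonneg _).trans (hC 0 le_rfl)
  refine ⟨C * D, fun t ht => ?_⟩
  rw [Real.norm_eq_abs]
  exact (abs_real_inner_le_norm _ _).trans
    (mul_le_mul (hC t ht) (hD t ht) (norm_nonneg _) hC0)

lemma inL2_of_sq_le {g : ℝ → F} {h : ℝ → ℝ}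
    (hh : IntegrableOn h (Ici 0)) (hgh : ∀ t, 0 ≤ t → ‖g t‖ ^ 2 ≤ h t) : InL2 g :=
  calc ∫⁻ t in Ici 0, ENNReal.ofReal (‖g t‖ ^ 2)
      ≤ ∫⁻ t in Ici 0, ENNReal.ofReal (h t) :=
        setLIntegral_mono' measurableSet_Ici fun t ht => ENNReal.ofReal_le_ofReal (hgh t ht)
    _ < ⊤ := hh.lintegral_lt_top

lemma tendsto_setLIntegral_Ici_atTop {f : ℝ → ℝ≥0∞} (hf : ∫⁻ t in Ici 0, f t ≠ ⊤) :
    Tendsto (fun T => ∫⁻ t in Ici T, f t) atTop (nhds 0) := by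
  set ν := volume.withDensity f
  have hν : ∀ T, ν (Ici T) = ∫⁻ t in Ici T, f t := fun T => withDensity_apply _ measurableSet_Ici
  have h := tendsto_measure_iInter_atTop (μ := ν) (fun T : ℝ => measurableSet_Ici.nullMeasurableSet)
    (fun _ _ hST => Ici_subset_Ici.2 hST) ⟨0, by rwa [hν]⟩
  have hempty : (⋂ T : ℝ, Ici T) = ∅ := eq_empty_of_forall_notMem fun x hx => by
    linarith [mem_Ici.1 (mem_iInter.1 hx (x + 1))]
  rw [hempty, measure_empty] at h
  simpa only [Function.comp_def, hν] using h

lemma inLinf_of_norm_sq_le {f : ℝ → F} {C : ℝ}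
    (h : ∀ t, 0 ≤ t → ‖f t‖ ^ 2 ≤ C) : InLinf f :=
  ⟨√C, fun t ht => (le_abs_self _).trans (Real.abs_le_sqrt (h t ht))⟩

end Signals

/-- Barbalat's lemma. -/
lemma tendsto_zero_of_hasDerivAt_of_inL2 {f f' : ℝ → ℝ}
    (hf : ∀ t, 0 ≤ t → HasDerivAt f (f' t) t) (hf' : InLinf f') (h2 : InL2 f) :
    Tendsto f atTop (nhds 0) := by
  obtain ⟨L, hL⟩ := hf'
  have hL0 : 0 ≤ L := (norm_nonneg _).trans (hL 0 le_rfl)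
  have hlip : ∀ t u, 0 ≤ t → 0 ≤ u → ‖f u - f t‖ ≤ L * ‖u - t‖ :=
    fun t u ht hu => (convex_Ici 0).norm_image_sub_le_of_norm_hasDerivWithin_le
      (fun τ hτ => (hf τ hτ).hasDerivWithinAt) (fun τ hτ => hL τ hτ) ht hu
  have htail := tendsto_setLIntegral_Ici_atTop
    (by simpa only [Real.norm_eq_abs, sq_abs] using h2.ne)
  rw [Metric.tendsto_atTop]
  intro ε hε
  set δ := ε / (2 * (L + 1))
  have hδ : 0 < δ := by positivity
  have hLδ : L * δ ≤ ε / 2 := by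
    rw [mul_div_assoc', div_le_div_iff₀ (by positivity) two_pos]
    nlinarith
  set m := ENNReal.ofReal (ε ^ 2 / 4) * ENNReal.ofReal δ
  have hm : 0 < m := ENNReal.mul_pos (by simp [hε]) (by simp [hδ])
  -- a value `ε ≤ |f t|` persists at half size over `[t, t + δ]`
  have hbig : ∀ t, 0 ≤ t → ε ≤ |f t| → m ≤ ∫⁻ u in Ici t, ENNReal.ofReal (f u ^ 2) := by
    intro t ht hft
    have hlow : ∀ u ∈ Icc t (t + δ), ENNReal.ofReal (ε ^ 2 / 4) ≤ ENNReal.ofReal (f u ^ 2) := by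
      intro u hu
      have hdist : |f u - f t| ≤ ε / 2 := by
        have := hlip t u ht (ht.trans hu.1)
        rw [Real.norm_eq_abs, Real.norm_eq_abs, abs_of_nonneg (sub_nonneg.2 hu.1)] at this
        nlinarith [hu.2]
      have hfu : ε / 2 ≤ |f u| := by
        linarith [abs_sub_abs_le_abs_sub (f t) (f u), abs_sub_comm (f t) (f u)]
      apply ENNReal.ofReal_le_ofReal
      nlinarith [sq_abs (f u)]
    calc m = ∫⁻ _ in Icc t (t + δ), ENNReal.ofReal (ε ^ 2 / 4) := by
          rw [setLIntegral_const, Real.volume_Icc, add_sub_cancel_left]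
      _ ≤ ∫⁻ u in Icc t (t + δ), ENNReal.ofReal (f u ^ 2) :=
          setLIntegral_mono' measurableSet_Icc hlow
      _ ≤ ∫⁻ u in Ici t, ENNReal.ofReal (f u ^ 2) := lintegral_mono_set Icc_subset_Ici_self
  obtain ⟨N, hN⟩ := eventually_atTop.1 (htail.eventually (gt_mem_nhds hm))
  refine ⟨max N 0, fun t ht => ?_⟩
  rw [Real.dist_eq, sub_zero]
  by_contra! h
  exact (hN t (le_of_max_le_left ht)).not_ge (hbig t (le_of_max_le_right ht) h)

section Lyapunov

variable {V V' : ℝ → ℝ}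

lemma antitoneOn_Ici_of_hasDerivAt_of_nonpos (hV : ∀ t, 0 ≤ t → HasDerivAt V (V' t) t)
    (hV' : ∀ t, 0 ≤ t → V' t ≤ 0) : AntitoneOn V (Ici 0) := by
  refine antitoneOn_of_hasDerivWithinAt_nonpos (f' := V') (convex_Ici 0)
    (fun t ht => (hV t ht).continuousAt.continuousWithinAt) (fun t ht => ?_) (fun t ht => ?_)
  all_goals rw [interior_Ici] at ht
  exacts [(hV t ht.le).hasDerivWithinAt, hV' t ht.le]

lemma integrableOn_Ici_of_hasDerivAt_of_nonpos {c : ℝ} (hV : ∀ t, 0 ≤ t → HasDerivAt V (V' t) t)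
    (hV' : ∀ t, 0 ≤ t → V' t ≤ 0) (hc : ∀ t, 0 ≤ t → c ≤ V t) : IntegrableOn V' (Ici 0) := by
  have hanti : Antitone fun t => V (max t 0) := fun t u htu =>
    antitoneOn_Ici_of_hasDerivAt_of_nonpos hV hV' (le_max_right t 0) (le_max_right u 0)
      (max_le_max_right 0 htu)
  have hlim := tendsto_atTop_ciInf hanti ⟨c, by rintro _ ⟨t, rfl⟩; exact hc _ (le_max_right t 0)⟩
  have hVlim : Tendsto V atTop (nhds (⨅ t, V (max t 0))) :=
    hlim.congr' (eventually_atTop.2 ⟨0, fun t ht => by rw [max_eq_left ht]⟩)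
  rw [integrableOn_Ici_iff_integrableOn_Ioi]
  exact integrableOn_Ioi_deriv_of_nonpos' hV (fun t ht => hV' t (le_of_lt ht)) hVlim

lemma inL2_of_mul_sq_le_neg_deriv {F : Type*} [NormedAddCommGroup F] {g : ℝ → F} {k : ℝ}
    (hk : 0 < k) (hV : ∀ t, 0 ≤ t → HasDerivAt V (V' t) t) (hV0 : ∀ t, 0 ≤ t → 0 ≤ V t)
    (hg : ∀ t, 0 ≤ t → k * ‖g t‖ ^ 2 ≤ -V' t) : InL2 g := by
  have hV' : ∀ t, 0 ≤ t → V' t ≤ 0 := fun t ht => by nlinarith [hg t ht, sq_nonneg ‖g t‖]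
  refine inL2_of_sq_le ((integrableOn_Ici_of_hasDerivAt_of_nonpos hV hV' hV0).neg.div_const k)
    fun t ht => ?_
  rw [le_div_iff₀ hk, mul_comm]
  exact hg t ht

end Lyapunov

lemma exists_pos_mul_sq_add_sq_le {a b d : ℝ} (ha : 0 < a) (h : b ^ 2 < a * d) :
    ∃ c > 0, ∀ x y : ℝ, c * (x ^ 2 + y ^ 2) ≤ a * x ^ 2 + 2 * b * x * y + d * y ^ 2 := by
  have hd : 0 < d := pos_of_mul_pos_right ((sq_nonneg b).trans_lt h) ha.le
  -- the smallest eigenvalue is at least `det / trace`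
  set c := (a * d - b ^ 2) / (a + d)
  have hc : 0 < c := div_pos (by linarith) (by linarith)
  have hca : c < a := by
    rw [div_lt_iff₀ (by linarith)]
    nlinarith
  have hdisc : (a - c) * (d - c) - b ^ 2 = c ^ 2 := by
    have : c * (a + d) = a * d - b ^ 2 := div_mul_cancel₀ _ (by linarith)
    linear_combination -this
  refine ⟨c, hc, fun x y => ?_⟩
  have hsq : 0 ≤ (a - c) * ((a - c) * x ^ 2 + 2 * b * x * y + (d - c) * y ^ 2) := by
    have : (a - c) * ((a - c) * x ^ 2 + 2 * b * x * y + (d - c) * y ^ 2) =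
        ((a - c) * x + b * y) ^ 2 + c ^ 2 * y ^ 2 := by
      linear_combination y ^ 2 * hdisc
    rw [this]
    positivity
  have := (mul_nonneg_iff_of_pos_left (sub_pos.2 hca)).1 hsq
  linarith

lemma exists_pos_quadratic_dissipation_le {η β μ : ℝ} (hη : 0 < η) (hβ : 0 < β)
    (hμ : (3 * η + 2) / (2 * η * β) < μ) :
    ∃ k > 0, ∀ s G H y w l q₁ q₂ : ℝ, H ^ 2 ≤ y * w → 0 ≤ w → 0 ≤ l → 0 ≤ q₁ → 0 ≤ q₂ →
      s * (-η * s + (G - H)) - (s + (G - H)) * (G + H) + (G ^ 2 + H ^ 2) / 2 -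
        β * (1 + μ * y) * w - l * (q₁ + q₂) / 2 ≤ -(k * (s ^ 2 + (G - H) ^ 2)) := by
  have hgain : 1 ^ 2 < η * (β * μ - 3 / 2) := by
    rw [div_lt_iff₀ (by positivity)] at hμ
    nlinarith
  have hμ0 : 0 < μ := lt_trans (by positivity) hμ
  obtain ⟨c, hc, hquad⟩ := exists_pos_mul_sq_add_sq_le hη hgain
  set k := min (c / 2) (1 / 4)
  have hk : 0 < k := by positivity
  refine ⟨k, hk, fun s G H y w l q₁ q₂ hHyw hw hl hq₁ hq₂ => ?_⟩
  have hgain_term : β * μ * H ^ 2 ≤ β * (1 + μ * y) * w := by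
    nlinarith [mul_le_mul_of_nonneg_left hHyw (mul_pos hβ hμ0).le, mul_nonneg hβ.le hw]
  have hexpand : s * (-η * s + (G - H)) - (s + (G - H)) * (G + H) + (G ^ 2 + H ^ 2) / 2 -
      β * (1 + μ * y) * w - l * (q₁ + q₂) / 2 ≤
      -(η * s ^ 2 + 2 * 1 * s * H + (β * μ - 3 / 2) * H ^ 2) - G ^ 2 / 2 := by
    nlinarith [mul_nonneg hl (add_nonneg hq₁ hq₂)]
  have hk_le : k * (s ^ 2 + (G - H) ^ 2) ≤ c * (s ^ 2 + H ^ 2) + G ^ 2 / 2 := by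
    have hGH : (G - H) ^ 2 ≤ 2 * G ^ 2 + 2 * H ^ 2 := by nlinarith [sq_nonneg (G + H)]
    calc k * (s ^ 2 + (G - H) ^ 2) ≤ k * (s ^ 2 + 2 * H ^ 2) + k * (2 * G ^ 2) := by
          nlinarith [mul_le_mul_of_nonneg_left hGH hk.le]
      _ ≤ c / 2 * (s ^ 2 + 2 * H ^ 2) + 1 / 4 * (2 * G ^ 2) := by
          gcongr
          exacts [min_le_left _ _, min_le_right _ _]
      _ ≤ c * (s ^ 2 + H ^ 2) + G ^ 2 / 2 := by nlinarith [sq_nonneg s]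
  linarith [hquad s H]

def compositeLyapunov {E : Type*} [NormedAddCommGroup E] [InnerProductSpace ℝ E] (s : ℝ → ℝ)
    (Q : ℝ → (E →L[ℝ] E)) (a : E) (ahat vhat : ℝ → E) (t : ℝ) : ℝ :=
  (s t ^ 2 + ⟪vhat t - a, Q t (vhat t - a)⟫ + ⟪vhat t - ahat t, Q t (vhat t - ahat t)⟫) / 2

section Adaptation

variable {p : ℕ}

lemma hasDerivAt_inner_apply_self_of_inv {W : ℝ → EuclideanSpace ℝ (Fin p)}
    {P : EuclideanSpace ℝ (Fin p) →L[ℝ] EuclideanSpace ℝ (Fin p)}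
    {Q : ℝ → (EuclideanSpace ℝ (Fin p) →L[ℝ] EuclideanSpace ℝ (Fin p))}
    {u y : EuclideanSpace ℝ (Fin p)} {l t : ℝ} (hP : P.IsSymmetric)
    (hPQ : P ∘L Q t = ContinuousLinearMap.id ℝ _) (hQP : Q t ∘L P = ContinuousLinearMap.id ℝ _)
    (hW : HasDerivAt W (P u) t) (hQ : HasDerivAt Q ((-l) • Q t + rankOne y) t) :
    HasDerivAt (fun τ => ⟪W τ, Q τ (W τ)⟫)
      (2 * ⟪u, W t⟫ - l * ⟪W t, Q t (W t)⟫ + ⟪y, W t⟫ ^ 2) t := by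
  refine (hW.inner ℝ (hQ.clm_apply hW)).congr_deriv ?_
  have hQPu : Q t (P u) = u := congr($hQP u)
  have hPuQW : ⟪P u, Q t (W t)⟫ = ⟪u, W t⟫ := by
    rw [show ⟪P u, Q t (W t)⟫ = ⟪u, P (Q t (W t))⟫ from hP u _, ← ContinuousLinearMap.comp_apply,
      hPQ, ContinuousLinearMap.id_apply]
  simp only [add_apply, smul_apply, rankOne,
    ContinuousLinearMap.smulRight_apply, innerSL_apply_apply, inner_add_right, inner_smul_right,
    hQPu, hPuQW, real_inner_comm (W t) y, real_inner_comm (W t) u]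
  ring

variable {s : ℝ → ℝ} {Y ahat vhat : ℝ → EuclideanSpace ℝ (Fin p)} {a : EuclideanSpace ℝ (Fin p)}
  {P Q : ℝ → (EuclideanSpace ℝ (Fin p) →L[ℝ] EuclideanSpace ℝ (Fin p))}

lemma hasDerivAt_compositeLyapunov {η β μ l t : ℝ}
    (hP : (P t).IsSymmetric) (hPQ : P t ∘L Q t = ContinuousLinearMap.id ℝ _)
    (hQP : Q t ∘L P t = ContinuousLinearMap.id ℝ _)
    (hQ : HasDerivAt Q ((-l) • Q t + rankOne (Y t)) t)
    (hs : HasDerivAt s (-η * s t + ⟪Y t, ahat t - a⟫) t)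
    (hv : HasDerivAt vhat (-(P t ((s t + ⟪Y t, ahat t - a⟫) • Y t))) t)
    (ha : HasDerivAt ahat ((β * (1 + μ * ‖Y t‖ ^ 2)) • P t (vhat t - ahat t)) t) :
    let G := ⟪Y t, vhat t - a⟫
    let H := ⟪Y t, vhat t - ahat t⟫
    HasDerivAt (compositeLyapunov s Q a ahat vhat)
      (s t * (-η * s t + (G - H)) - (s t + (G - H)) * (G + H) + (G ^ 2 + H ^ 2) / 2 -
        β * (1 + μ * ‖Y t‖ ^ 2) * ‖vhat t - ahat t‖ ^ 2 -
        l * (⟪vhat t - a, Q t (vhat t - a)⟫ + ⟪vhat t - ahat t, Q t (vhat t - ahat t)⟫) / 2) t := by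
  intro G H
  have herr : ⟪Y t, ahat t - a⟫ = G - H := by
    rw [← inner_sub_right, sub_sub_sub_cancel_left]
  set σ := s t + ⟪Y t, ahat t - a⟫
  set N := β * (1 + μ * ‖Y t‖ ^ 2)
  have hW₁ := hasDerivAt_inner_apply_self_of_inv (u := -(σ • Y t)) hP hPQ hQP
    (by simpa only [map_neg] using hv.sub_const a) hQ
  have hW₂ := hasDerivAt_inner_apply_self_of_inv (W := fun τ => vhat τ - ahat τ)
    (u := -(σ • Y t) - N • (vhat t - ahat t))
    hP hPQ hQP ((hv.sub ha).congr_deriv (by simp only [map_sub, map_neg, map_smul])) hQ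
  have hG : ⟪-(σ • Y t), vhat t - a⟫ = -(σ * G) := by
    rw [inner_neg_left, real_inner_smul_left]
  have hH : ⟪-(σ • Y t) - N • (vhat t - ahat t), vhat t - ahat t⟫ =
      -(σ * H) - N * ‖vhat t - ahat t‖ ^ 2 := by
    rw [inner_sub_left, inner_neg_left, real_inner_smul_left, real_inner_smul_left,
      real_inner_self_eq_norm_sq]
  refine ((((hs.pow 2).add hW₁).add hW₂).div_const 2).congr_deriv ?_
  rw [hG, hH]
  simp only [σ, herr]
  ring

lemma compositeLyapunov_nonneg {t : ℝ} (hP : (P t).IsPositive)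
    (hPQ : P t ∘L Q t = ContinuousLinearMap.id ℝ _) : 0 ≤ compositeLyapunov s Q a ahat vhat t := by
  have hq₁ := hP.inner_apply_self_nonneg_of_comp_eq_id hPQ (vhat t - a)
  have hq₂ := hP.inner_apply_self_nonneg_of_comp_eq_id hPQ (vhat t - ahat t)
  unfold compositeLyapunov
  positivity

lemma inLinf_of_compositeLyapunov_le {P₀ C : ℝ} (hP : ∀ t, 0 ≤ t → (P t).IsPositive)
    (hPQ : ∀ t, 0 ≤ t → P t ∘L Q t = ContinuousLinearMap.id ℝ _) (hPbd : ∀ t, 0 ≤ t → ‖P t‖ ≤ P₀)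
    (hV : ∀ t, 0 ≤ t → compositeLyapunov s Q a ahat vhat t ≤ C) :
    InLinf s ∧ InLinf (fun t => vhat t - a) ∧ InLinf (fun t => vhat t - ahat t) := by
  have hq₁ := fun t ht => (hP t ht).inner_apply_self_nonneg_of_comp_eq_id (hPQ t ht) (vhat t - a)
  have hq₂ := fun t ht =>
    (hP t ht).inner_apply_self_nonneg_of_comp_eq_id (hPQ t ht) (vhat t - ahat t)
  have hP₀ : 0 ≤ P₀ := (norm_nonneg _).trans (hPbd 0 le_rfl)
  unfold compositeLyapunov at hV
  refine ⟨inLinf_of_norm_sq_le (C := 2 * C) fun t ht => ?_,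
    inLinf_of_norm_sq_le (C := P₀ * (2 * C)) fun t ht => ?_,
    inLinf_of_norm_sq_le (C := P₀ * (2 * C)) fun t ht => ?_⟩
  · rw [Real.norm_eq_abs, sq_abs]
    linarith [hV t ht, hq₁ t ht, hq₂ t ht]
  · exact ((hP t ht).norm_sq_le_mul_inner_of_comp_eq_id (hPQ t ht) (hPbd t ht) _).trans
      (mul_le_mul_of_nonneg_left (by linarith [hV t ht, hq₂ t ht, sq_nonneg (s t)]) hP₀)
  · exact ((hP t ht).norm_sq_le_mul_inner_of_comp_eq_id (hPQ t ht) (hPbd t ht) _).trans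
      (mul_le_mul_of_nonneg_left (by linarith [hV t ht, hq₁ t ht, sq_nonneg (s t)]) hP₀)

lemma exists_pos_deriv_compositeLyapunov_le {η β μ lam₀ P₀ : ℝ} (hη : 0 < η) (hβ : 0 < β)
    (hlam₀ : 0 ≤ lam₀) (hP₀ : 0 < P₀) (hμ : (3 * η + 2) / (2 * η * β) < μ)
    (hP : ∀ t, 0 ≤ t → (P t).IsPositive)
    (hPQ : ∀ t, 0 ≤ t →
      P t ∘L Q t = ContinuousLinearMap.id ℝ _ ∧ Q t ∘L P t = ContinuousLinearMap.id ℝ _)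
    (hPbd : ∀ t, 0 ≤ t → ‖P t‖ ≤ P₀)
    (hQdyn : ∀ t, 0 ≤ t →
      HasDerivAt Q ((-(lam₀ * (1 - ‖P t‖ / P₀))) • Q t + rankOne (Y t)) t)
    (hs : ∀ t, 0 ≤ t → HasDerivAt s (-η * s t + ⟪Y t, ahat t - a⟫) t)
    (hv : ∀ t, 0 ≤ t → HasDerivAt vhat (-(P t ((s t + ⟪Y t, ahat t - a⟫) • Y t))) t)
    (ha : ∀ t, 0 ≤ t →
      HasDerivAt ahat ((β * (1 + μ * ‖Y t‖ ^ 2)) • P t (vhat t - ahat t)) t) :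
    ∃ k > 0, ∀ t, 0 ≤ t →
      HasDerivAt (compositeLyapunov s Q a ahat vhat)
        (deriv (compositeLyapunov s Q a ahat vhat) t) t ∧
      deriv (compositeLyapunov s Q a ahat vhat) t ≤ -(k * (s t ^ 2 + ⟪Y t, ahat t - a⟫ ^ 2)) := by
  obtain ⟨k, hk, hbound⟩ := exists_pos_quadratic_dissipation_le hη hβ hμ
  refine ⟨k, hk, fun t ht => ?_⟩
  have hV := hasDerivAt_compositeLyapunov (hP t ht).isSymmetric (hPQ t ht).1 (hPQ t ht).2
    (hQdyn t ht) (hs t ht) (hv t ht) (ha t ht)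
  refine ⟨hV.differentiableAt.hasDerivAt, ?_⟩
  have herr : ⟪Y t, ahat t - a⟫ = ⟪Y t, vhat t - a⟫ - ⟪Y t, vhat t - ahat t⟫ := by
    rw [← inner_sub_right, sub_sub_sub_cancel_left]
  rw [hV.deriv, herr]
  have hforget : 0 ≤ lam₀ * (1 - ‖P t‖ / P₀) :=
    mul_nonneg hlam₀ (sub_nonneg.2 ((div_le_one hP₀).2 (hPbd t ht)))
  have hCS : ⟪Y t, vhat t - ahat t⟫ ^ 2 ≤ ‖Y t‖ ^ 2 * ‖vhat t - ahat t‖ ^ 2 := by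
    rw [← mul_pow, ← sq_abs]
    exact pow_le_pow_left₀ (abs_nonneg _) (abs_real_inner_le_norm _ _) 2
  exact hbound (s t) _ _ _ _ _ _ _ hCS (sq_nonneg _) hforget
    ((hP t ht).inner_apply_self_nonneg_of_comp_eq_id (hPQ t ht).1 _)
    ((hP t ht).inner_apply_self_nonneg_of_comp_eq_id (hPQ t ht).1 _)

end Adaptation

/-- higher-order composite adaptation with bounded-gain-forgetting
learning rate. -/
theorem bgf_higher_order_composite_adaptation_linear
    {n p : ℕ}
    (x xd : ℝ → EuclideanSpace ℝ (Fin n))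
    (s : ℝ → ℝ)
    (Y : ℝ → EuclideanSpace ℝ (Fin p))
    (a : EuclideanSpace ℝ (Fin p))
    (ahat vhat : ℝ → EuclideanSpace ℝ (Fin p))
    (P Q : ℝ → (EuclideanSpace ℝ (Fin p) →L[ℝ] EuclideanSpace ℝ (Fin p)))
    (η β μ lam₀ P₀ : ℝ)
    (hη : 0 < η) (hβ : 0 < β) (hlam₀ : 0 < lam₀) (hP₀ : 0 < P₀)
    (hμ : (3 * η + 2) / (2 * η * β) < μ)
    -- P(t) is symmetric positive definite
    (hPsym : ∀ t, 0 ≤ t → ∀ v w : EuclideanSpace ℝ (Fin p), ⟪P t v, w⟫ = ⟪v, P t w⟫)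
    (hPpos : ∀ t, 0 ≤ t → ∀ v : EuclideanSpace ℝ (Fin p), v ≠ 0 → 0 < ⟪v, P t v⟫)
    -- Q(t) = P(t)⁻¹
    (hPQ : ∀ t, 0 ≤ t →
      (P t).comp (Q t) = ContinuousLinearMap.id ℝ (EuclideanSpace ℝ (Fin p)) ∧
      (Q t).comp (P t) = ContinuousLinearMap.id ℝ (EuclideanSpace ℝ (Fin p)))
    -- the forgetting factor keeps ‖P(t)‖ ≤ P₀ (so that λ(t) ≥ 0)
    (hPbd : ∀ t, 0 ≤ t → ‖P t‖ ≤ P₀)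
    -- bounded-gain-forgetting dynamics (d/dt) P⁻¹ = -λ(t) P⁻¹ + YᵀY,
    -- λ(t) = λ₀ (1 - ‖P(t)‖/P₀)
    (hQdyn : ∀ t, 0 ≤ t →
      HasDerivAt Q ((-(lam₀ * (1 - ‖P t‖ / P₀))) • Q t + rankOne (Y t)) t)
    -- error dynamics ṡ = -η s + Y (â - a)
    (hs : ∀ t, 0 ≤ t → HasDerivAt s (-η * s t + ⟪Y t, ahat t - a⟫) t)
    -- higher-order composite law v̂̇ = -P(t) Yᵀ(s + Y(â - a)), â̇ = β 𝒩(t) P(t)(v̂ - â),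
    -- 𝒩(t) = 1 + μ‖Y(t)‖²
    (hv : ∀ t, 0 ≤ t →
      HasDerivAt vhat (-(P t ((s t + ⟪Y t, ahat t - a⟫) • Y t))) t)
    (ha : ∀ t, 0 ≤ t →
      HasDerivAt ahat ((β * (1 + μ * ‖Y t‖ ^ 2)) • P t (vhat t - ahat t)) t)
    -- the regressor Y(x, t) is locally bounded in x uniformly in t
    (hYloc : ∀ R : ℝ, ∃ M : ℝ, ∀ t, 0 ≤ t → ‖x t‖ ≤ R → ‖Y t‖ ≤ M)
    -- boundedness of s implies boundedness of x
    (hsx : InLinf s → InLinf x)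
    -- s → 0 implies x → x_d
    (hxd : Tendsto s atTop (nhds 0) →
      Tendsto (fun t => x t - xd t) atTop (nhds 0)) :
    InLinf x ∧ InLinf vhat ∧ InLinf ahat ∧
    (InL2 (fun t => ⟪Y t, ahat t - a⟫) ∧ InLinf (fun t => ⟪Y t, ahat t - a⟫)) ∧
    (InL2 s ∧ InLinf s) ∧
    Tendsto s atTop (nhds 0) ∧
    Tendsto (fun t => x t - xd t) atTop (nhds 0) := by
  have hP := fun t ht => ContinuousLinearMap.isPositive_of_inner_pos (hPsym t ht) (hPpos t ht)
  obtain ⟨k, hk, hV⟩ := exists_pos_deriv_compositeLyapunov_le hη hβ hlam₀.le hP₀ hμ hP hPQ hPbd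
    hQdyn hs hv ha
  set V := compositeLyapunov s Q a ahat vhat
  have hV0 : ∀ t, 0 ≤ t → 0 ≤ V t := fun t ht => compositeLyapunov_nonneg (hP t ht) (hPQ t ht).1
  have hV_anti := antitoneOn_Ici_of_hasDerivAt_of_nonpos (fun t ht => (hV t ht).1) fun t ht =>
    (hV t ht).2.trans (by nlinarith [sq_nonneg (s t)])
  obtain ⟨hs_inf, hW₁, hW₂⟩ := inLinf_of_compositeLyapunov_le hP (fun t ht => (hPQ t ht).1) hPbd
    fun t ht => hV_anti self_mem_Ici ht ht
  have hx := hsx hs_inf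
  have hY : InLinf Y := by
    obtain ⟨R, hR⟩ := hx
    obtain ⟨M, hM⟩ := hYloc R
    exact ⟨M, fun t ht => hM t ht (hR t ht)⟩
  have herr_inf : InLinf fun t => ⟪Y t, ahat t - a⟫ := by
    simpa only [sub_sub_sub_cancel_left] using hY.inner (hW₁.sub hW₂)
  have hs_L2 : InL2 s := inL2_of_mul_sq_le_neg_deriv hk (fun t ht => (hV t ht).1) hV0
    fun t ht => by
      rw [Real.norm_eq_abs, sq_abs]
      nlinarith [(hV t ht).2, sq_nonneg ⟪Y t, ahat t - a⟫]
  have herr_L2 : InL2 fun t => ⟪Y t, ahat t - a⟫ := inL2_of_mul_sq_le_neg_deriv hk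
    (fun t ht => (hV t ht).1) hV0 fun t ht => by
      rw [Real.norm_eq_abs, sq_abs]
      nlinarith [(hV t ht).2, sq_nonneg (s t)]
  have hs_lim := tendsto_zero_of_hasDerivAt_of_inL2 hs ((hs_inf.const_mul (-η)).add herr_inf) hs_L2
  have hvhat : InLinf vhat := by simpa only [sub_add_cancel] using hW₁.add (inLinf_const a)
  have hahat : InLinf ahat := by simpa only [sub_sub_cancel] using hvhat.sub hW₂
  exact ⟨hx, hvhat, hahat, ⟨herr_L2, herr_inf⟩, ⟨hs_L2, hs_inf⟩, hs_lim, hxd hs_lim⟩
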